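/- arXiv:0806.1327 — 2 statements merged into one kernel-verified Lean document; each statement's English description precedes it below -/
import Mathlib

section
/- For every natural number n > 1, the Cesàro means (1/N) ∑_{m=1}^{N} ∏_{p prime, p ∣ m} (1 + 1/p^{n-1}) converge, as N → ∞, to ζ(n)/ζ(2n), where ζ is the Riemann zeta function. -/
/-!
Because `d ↦ d^(1-n)` is multiplicative, `∏_{p ∣ m} (1 + p^(1-n))` is the sum of `d^(1-n)`
over the squarefree divisors `d` of `m`, so the `N`-th partial sum is
`∑_{d ≤ N squarefree} d^(1-n) ⌊N/d⌋`.
After division by `N`, each term tends to `d^(-n)` and is dominated by it, so dominated convergence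
gives the limit `∑_{d squarefree} d^(-n)`. Its Euler product is
`∏_p (1 + p^(-n)) = ∏_p (1 - p^(-2n)) / (1 - p^(-n)) = ζ(n) / ζ(2n)`.
-/

open Filter Finset Topology ArithmeticFunction
open scoped ArithmeticFunction.zeta

theorem Nat.tendsto_cast_div_div_self_atTop (d : ℕ) :
    Tendsto (fun N : ℕ => ((N / d : ℕ) : ℝ) / N) atTop (𝓝 (1 / d)) := by
  rcases Nat.eq_zero_or_pos d with rfl | hd
  · simp
  have hfloor : Tendsto (fun N : ℕ => (⌊(N : ℝ) / d⌋₊ : ℝ) / ((N : ℝ) / d) * (1 / d)) atTop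
      (𝓝 (1 / d)) := by
    simpa using (tendsto_nat_floor_div_atTop.comp
      (tendsto_natCast_atTop_atTop.atTop_div_const (by positivity : (0 : ℝ) < d))).mul_const
      (1 / (d : ℝ))
  refine hfloor.congr' ?_
  filter_upwards [eventually_ne_atTop 0] with N hN
  rw [Nat.floor_div_eq_div]
  field_simp

namespace ArithmeticFunction

variable {R : Type*} [CommSemiring R]

def restrictSquarefree (f : ArithmeticFunction R) : ArithmeticFunction R :=
  ⟨fun d => if Squarefree d then f d else 0, by simp⟩

@[simp]
theorem restrictSquarefree_apply (f : ArithmeticFunction R) (d : ℕ) :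
    f.restrictSquarefree d = if Squarefree d then f d else 0 :=
  rfl

theorem restrictSquarefree_mul_zeta_apply (f : ArithmeticFunction R) (m : ℕ) :
    (f.restrictSquarefree * ζ) m = ∑ d ∈ m.divisors with Squarefree d, f d := by
  rw [coe_mul_zeta_apply, sum_filter]
  rfl

theorem IsMultiplicative.prod_primeFactors_one_add {f : ArithmeticFunction R}
    (hf : f.IsMultiplicative) {m : ℕ} (hm : m ≠ 0) :
    ∏ p ∈ m.primeFactors, (1 + f p) = ∑ d ∈ m.divisors with Squarefree d, f d := by
  rw [Nat.sum_divisors_filter_squarefree hm, prod_one_add, Nat.factors_eq, List.toFinset_coe,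
    Nat.toFinset_factors]
  refine sum_congr rfl fun t ht => ?_
  rw [Finset.prod_val, ← hf.map_prod_of_subset_primeFactors m t (mem_powerset.mp ht)]
  rfl

theorem tendsto_mean_mul_zeta {𝕜 : Type*} [RCLike 𝕜] (g : ArithmeticFunction 𝕜)
    (hg : Summable fun d : ℕ => ‖g d / d‖) :
    Tendsto (fun N : ℕ => (1 / (N : 𝕜)) * ∑ m ∈ Ioc 0 N, (g * ↑ζ) m) atTop
      (𝓝 (∑' d, g d / d)) := by
  have hmean (N : ℕ) : (1 / (N : 𝕜)) * ∑ m ∈ Ioc 0 N, (g * ↑ζ) m =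
      ∑' d, g d * (((N / d : ℕ) : 𝕜) / N) := by
    rw [sum_Ioc_mul_zeta_eq_sum, tsum_eq_sum (s := Ioc 0 N), mul_sum]
    · exact sum_congr rfl fun d _ => by ring
    · intro d hd
      rcases Nat.eq_zero_or_pos d with rfl | hd0
      · simp
      · rw [Nat.div_eq_of_lt (by simp at hd; omega)]
        simp
  simp_rw [hmean]
  refine tendsto_tsum_of_dominated_convergence hg (fun d => ?_)
    (Eventually.of_forall fun N d => ?_)
  · rw [div_eq_mul_one_div]
    refine tendsto_const_nhds.mul ?_
    simpa [Function.comp_def] using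
      ((RCLike.continuous_ofReal (K := 𝕜)).tendsto _).comp (Nat.tendsto_cast_div_div_self_atTop d)
  · rw [norm_mul, norm_div, norm_div, RCLike.norm_natCast, RCLike.norm_natCast,
      RCLike.norm_natCast, div_eq_mul_one_div (‖g d‖)]
    refine mul_le_mul_of_nonneg_left ?_ (norm_nonneg _)
    calc ((N / d : ℕ) : ℝ) / N ≤ (N / d) / N := by gcongr; exact Nat.cast_div_le
      _ ≤ 1 / d := by
        rcases eq_or_ne (N : ℝ) 0 with hN | hN
        · simp [hN]
        · rw [div_div_cancel_left' hN, one_div]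

end ArithmeticFunction

theorem Nat.Prime.tsum_ite_squarefree_pow {α : Type*} [AddCommMonoid α] [TopologicalSpace α]
    {p : ℕ} (hp : p.Prime) (u : ℕ → α) :
    ∑' e, (if Squarefree (p ^ e) then u (p ^ e) else 0) = u 1 + u p := by
  rw [tsum_eq_sum (s := range 2), sum_range_succ, sum_range_one]
  · simp [hp.squarefree]
  · intro e he
    have he1 : 1 < e := by simpa using he
    rw [if_neg fun h => he1.ne' ((Nat.squarefree_pow_iff hp.ne_one (by omega)).mp h).2]

theorem norm_natCast_cpow_neg_lt_one {p : ℕ} (hp : 1 < p) {s : ℂ} (hs : 0 < s.re) :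
    ‖(p : ℂ) ^ (-s)‖ < 1 := by
  rw [Complex.norm_natCast_cpow_of_pos (by omega)]
  exact Real.rpow_lt_one_of_one_lt_of_neg (by exact_mod_cast hp) (by simpa using hs)

theorem summable_norm_ite_squarefree_cpow_neg {s : ℂ} (hs : 1 < s.re) :
    Summable fun d : ℕ => ‖if Squarefree d then (d : ℂ) ^ (-s) else 0‖ :=
  (summable_riemannZetaSummand hs).of_nonneg_of_le (fun _ => norm_nonneg _) fun d => by
    simp only [riemannZetaSummandHom]
    split_ifs <;> simp

theorem tsum_ite_squarefree_cpow_neg {s : ℂ} (hs : 1 < s.re) :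
    ∑' d : ℕ, (if Squarefree d then (d : ℂ) ^ (-s) else 0) =
      riemannZeta s / riemannZeta (2 * s) := by
  let f : ℕ → ℂ := fun d => if Squarefree d then (d : ℂ) ^ (-s) else 0
  have hs2 : 1 < (2 * s).re := by simp; linarith
  have hf_mul {a b : ℕ} (hab : a.Coprime b) : f (a * b) = f a * f b := by
    simp only [f, Nat.squarefree_mul hab, Nat.cast_mul, Complex.natCast_mul_natCast_cpow]
    split_ifs <;> simp_all
  have hf_euler : HasProd (fun p : Nat.Primes => 1 + (p : ℂ) ^ (-s)) (∑' d, f d) := by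
    convert EulerProduct.eulerProduct_hasProd (by simp [f]) hf_mul
      (summable_norm_ite_squarefree_cpow_neg hs) (by simp [f]) using 2 with p
    exact ((p.prop.tsum_ite_squarefree_pow fun d : ℕ => (d : ℂ) ^ (-s)).trans (by simp)).symm
  have hfactor (p : Nat.Primes) :
      (1 + (p : ℂ) ^ (-s)) * (1 - (p : ℂ) ^ (-(2 * s)))⁻¹ = (1 - (p : ℂ) ^ (-s))⁻¹ := by
    have hx := norm_natCast_cpow_neg_lt_one p.prop.one_lt (s := s) (by linarith)
    rw [neg_mul_eq_mul_neg, Complex.cpow_ofNat_mul]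
    generalize (p : ℂ) ^ (-s) = x at hx ⊢
    have h2 : 1 + x ≠ 0 := fun h => by simp [show x = -1 by linear_combination h] at hx
    rw [show 1 - x ^ 2 = (1 - x) * (1 + x) by ring]
    field_simp
  have hprod := hf_euler.mul (riemannZeta_eulerProduct_hasProd hs2)
  simp only [hfactor] at hprod
  rw [eq_div_iff (riemannZeta_ne_zero_of_one_lt_re hs2)]
  exact hprod.unique (riemannZeta_eulerProduct_hasProd hs)

theorem cesaro_euler_like_plus_nat (n : ℕ) (hn : 1 < n) :
    Tendsto (fun N : ℕ =>
        (1 / (N : ℂ)) * ∑ m ∈ Finset.Icc 1 N,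
          ∏ p ∈ m.primeFactors, (1 + 1 / (p : ℂ) ^ (n - 1)))
      atTop (nhds (riemannZeta n / riemannZeta (2 * n))) := by
  set h : ArithmeticFunction ℂ := pdiv ζ (pow (n - 1))
  have h_mult : h.IsMultiplicative :=
    isMultiplicative_zeta.natCast.pdiv isMultiplicative_pow.natCast
  have h_apply {d : ℕ} (hd : d ≠ 0) : h d = 1 / (d : ℂ) ^ (n - 1) := by
    simp [h, hd, pow_apply]
  have hmean (N : ℕ) : ∑ m ∈ Icc 1 N, ∏ p ∈ m.primeFactors, (1 + 1 / (p : ℂ) ^ (n - 1)) =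
      ∑ m ∈ Ioc 0 N, (h.restrictSquarefree * ζ) m := by
    refine sum_congr rfl fun m hm => ?_
    have hm0 : m ≠ 0 := by simp at hm; omega
    rw [restrictSquarefree_mul_zeta_apply, ← h_mult.prod_primeFactors_one_add hm0]
    exact prod_congr rfl fun p hp => by rw [h_apply (Nat.prime_of_mem_primeFactors hp).ne_zero]
  have hterm (d : ℕ) :
      h.restrictSquarefree d / d = if Squarefree d then (d : ℂ) ^ (-(n : ℂ)) else 0 := by
    by_cases hd : Squarefree d
    · rw [restrictSquarefree_apply, if_pos hd, if_pos hd, h_apply hd.ne_zero, Complex.cpow_neg,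
        Complex.cpow_natCast, div_div, ← pow_succ, Nat.sub_add_cancel hn.le, one_div]
    · simp [hd]
  have hs : 1 < (n : ℂ).re := by simpa using hn
  simp_rw [hmean]
  rw [← tsum_ite_squarefree_cpow_neg hs, ← tsum_congr hterm]
  exact tendsto_mean_mul_zeta _
    (by simpa only [hterm] using summable_norm_ite_squarefree_cpow_neg hs)
end

section
/- For every complex number s with real part greater than 1, the Cesàro means (1/N) ∑_{m=1}^{N} ∏_{p prime, p ∣ m} (1 + 1/p^{s-1}) converge, as N → ∞, to ζ(s)/ζ(2s), where ζ is the Riemann zeta function. -/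
/-!
Write `g d = μ(d)² d^(1-s)`; then `∏_{p ∣ m} (1 + p^(1-s)) = ∑_{d ∣ m} g d`. Swapping the order of
summation, the mean over `m ≤ N` is `∑_{d ≤ N} g d ⌊N/d⌋ / N`, which tends to
`∑_d g d / d = ∑_d μ(d)² d^(-s)` by dominated convergence, with `|d^(-s)|` as summable majorant.
Comparing Euler products, `∑_n μ(n)² n^(-s) = ∏_p (1 + p^(-s)) = ∏_p (1 - p^(-2s)) / (1 - p^(-s))`,
which is `ζ(s) / ζ(2s)`.
-/

open Filter Finset Topology

theorem prod_primeFactors_one_add_eq_sum_divisors_squarefree {R : Type*} [CommSemiring R]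
    (w : ℕ →* R) {m : ℕ} (hm : m ≠ 0) :
    ∏ p ∈ m.primeFactors, (1 + w p) = ∑ d ∈ m.divisors with Squarefree d, w d := by
  rw [Nat.sum_divisors_filter_squarefree hm, prod_one_add, Nat.factors_eq, List.toFinset_coe,
    Nat.toFinset_factors]
  refine sum_congr rfl fun t _ => ?_
  rw [← map_prod, prod_val, Function.id_def]

theorem sum_Icc_sum_divisors_eq_sum_nsmul {M : Type*} [AddCommMonoid M] (g : ℕ → M) (N : ℕ) :
    ∑ m ∈ Icc 1 N, ∑ d ∈ m.divisors, g d = ∑ d ∈ Icc 1 N, (N / d) • g d := by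
  rw [show Icc 1 N = Ioc 0 N from Icc_add_one_left_eq_Ioc 0 N,
    sum_comm' (s' := fun d => {m ∈ Ioc 0 N | d ∣ m}) (t' := Ioc 0 N)]
  · simp only [sum_const, Nat.Ioc_filter_dvd_card_eq_div]
  · intro m d
    simp only [mem_Ioc, mem_filter, Nat.mem_divisors]
    constructor
    · rintro ⟨⟨hm, hmN⟩, hdm, -⟩
      exact ⟨⟨⟨hm, hmN⟩, hdm⟩, Nat.pos_of_dvd_of_pos hdm hm, (Nat.le_of_dvd hm hdm).trans hmN⟩
    · rintro ⟨⟨⟨hm, hmN⟩, hdm⟩, -⟩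
      exact ⟨⟨hm, hmN⟩, hdm, hm.ne'⟩

theorem tendsto_natCast_div_div_atTop (d : ℕ) :
    Tendsto (fun N : ℕ => ((N / d : ℕ) : ℝ) / N) atTop (𝓝 (d : ℝ)⁻¹) := by
  rcases Nat.eq_zero_or_pos d with rfl | hd
  · simp
  have hd' : (0 : ℝ) < d := Nat.cast_pos.mpr hd
  have hfloor := (tendsto_nat_floor_div_atTop (R := ℝ)).comp
    (tendsto_natCast_atTop_atTop.atTop_div_const hd')
  rw [← one_mul (d : ℝ)⁻¹]
  refine (hfloor.mul_const (d : ℝ)⁻¹).congr' ?_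
  filter_upwards [eventually_gt_atTop 0] with N hN
  have hN' : (0 : ℝ) < N := Nat.cast_pos.mpr hN
  rw [Function.comp_apply, Nat.floor_div_eq_div]
  field_simp

theorem natCast_div_div_le (N d : ℕ) : ((N / d : ℕ) : ℝ) / N ≤ (d : ℝ)⁻¹ := by
  rcases Nat.eq_zero_or_pos N with rfl | hN
  · simp
  calc ((N / d : ℕ) : ℝ) / N ≤ (N / d : ℝ) / N := by gcongr; exact Nat.cast_div_le
    _ = (d : ℝ)⁻¹ := by field_simp

theorem tendsto_cesaro_sum_divisors {𝕜 : Type*} [RCLike 𝕜] {g : ℕ → 𝕜}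
    (hg : Summable fun d : ℕ => ‖g d / d‖) :
    Tendsto (fun N : ℕ => 1 / (N : 𝕜) * ∑ m ∈ Icc 1 N, ∑ d ∈ m.divisors, g d) atTop
      (𝓝 (∑' d, g d / d)) := by
  let ratio : ℕ → ℕ → 𝕜 := fun N d => (((N / d : ℕ) : ℝ) / N : ℝ)
  have hsum_eq (N : ℕ) : 1 / (N : 𝕜) * ∑ m ∈ Icc 1 N, ∑ d ∈ m.divisors, g d =
      ∑' d, ratio N d * g d := by
    rw [sum_Icc_sum_divisors_eq_sum_nsmul, mul_sum, tsum_eq_sum (s := Icc 1 N)]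
    · refine sum_congr rfl fun d _ => ?_
      simp only [ratio, nsmul_eq_mul]
      push_cast
      ring
    · intro d hd
      rcases Nat.eq_zero_or_pos d with rfl | hd0
      · simp [ratio]
      · simp [ratio, Nat.div_eq_of_lt (not_le.mp fun h => hd (mem_Icc.mpr ⟨hd0, h⟩))]
  simp_rw [hsum_eq]
  refine tendsto_tsum_of_dominated_convergence hg (fun d => ?_) (.of_forall fun N d => ?_)
  · have := ((RCLike.continuous_ofReal (K := 𝕜)).tendsto _).comp
      (tendsto_natCast_div_div_atTop d) |>.mul_const (g d)
    rwa [RCLike.ofReal_inv, RCLike.ofReal_natCast, inv_mul_eq_div] at this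
  · rw [norm_mul, RCLike.norm_ofReal, abs_of_nonneg (by positivity), norm_div,
      RCLike.norm_natCast, div_eq_inv_mul (‖g d‖)]
    exact mul_le_mul_of_nonneg_right (natCast_div_div_le N d) (norm_nonneg _)

theorem tsum_ite_squarefree_prime_pow {R : Type*} [Semiring R] [TopologicalSpace R] (w : ℕ →*₀ R)
    {p : ℕ} (hp : p.Prime) :
    ∑' e, (if Squarefree (p ^ e) then w (p ^ e) else 0) = 1 + w p := by
  have hvanish : ∀ e ∉ range 2, (if Squarefree (p ^ e) then w (p ^ e) else 0) = 0 := by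
    intro e he
    rw [mem_range, not_lt] at he
    rw [if_neg (by rw [Nat.squarefree_pow_iff hp.ne_one (by omega)]; omega)]
  rw [tsum_eq_sum hvanish]
  simp [sum_range_succ, hp.prime.squarefree]

section EulerProduct

variable {F : Type*} [NormedField F] [CompleteSpace F]

theorem eulerProduct_squarefree_hasProd (w : ℕ →*₀ F) (hw : Summable (‖w ·‖)) :
    HasProd (fun p : Nat.Primes => 1 + w p) (∑' n, if Squarefree n then w n else 0) := by
  have hmul : ∀ {m n : ℕ}, m.Coprime n → (if Squarefree (m * n) then w (m * n) else 0) =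
      (if Squarefree m then w m else 0) * (if Squarefree n then w n else 0) := by
    intro m n hmn
    by_cases hm : Squarefree m <;> by_cases hn : Squarefree n <;> simp [Nat.squarefree_mul hmn, *]
  have hsum : Summable (fun n => ‖if Squarefree n then w n else 0‖) :=
    hw.of_nonneg_of_le (fun _ => norm_nonneg _) fun n => by split_ifs <;> simp
  convert EulerProduct.eulerProduct_hasProd (by simp) hmul hsum (by simp) using 2 with p
  exact (tsum_ite_squarefree_prime_pow w p.prop).symm

theorem tsum_squarefree_mul_tsum_sq (w : ℕ →*₀ F) (hw : Summable (‖w ·‖)) :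
    (∑' n, if Squarefree n then w n else 0) * ∑' n, w n ^ 2 = ∑' n, w n := by
  have hw2 : Summable (‖(w.comp (powMonoidWithZeroHom two_ne_zero)) ·‖) :=
    hw.comp_injective (Nat.pow_left_injective two_ne_zero)
  have hsq := EulerProduct.eulerProduct_completely_multiplicative_hasProd hw2
  simp only [MonoidWithZeroHom.comp_apply, powMonoidWithZeroHom_apply, map_pow] at hsq
  refine ((eulerProduct_squarefree_hasProd w hw).mul hsq).unique ?_
  convert EulerProduct.eulerProduct_completely_multiplicative_hasProd hw using 2 with p
  have hlt : ‖w p‖ < 1 := Summable.norm_lt_one (f := (w : ℕ →* F)) hw.of_norm p.prop.one_lt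
  have hsub : 1 - w p ≠ 0 := fun h => by simp [← sub_eq_zero.mp h] at hlt
  have hadd : 1 + w p ≠ 0 := fun h => by simp [eq_neg_of_add_eq_zero_right h] at hlt
  -- the Euler factors satisfy `(1 + x) * (1 - x ^ 2)⁻¹ = (1 - x)⁻¹`
  rw [show (1 : F) - w p ^ 2 = (1 - w p) * (1 + w p) by ring]
  field_simp

end EulerProduct

theorem tsum_squarefree_cpow_neg {s : ℂ} (hs : 1 < s.re) :
    ∑' n : ℕ, (if Squarefree n then (n : ℂ) ^ (-s) else 0) =
      riemannZeta s / riemannZeta (2 * s) := by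
  have h2s : 1 < (2 * s).re := by
    simp only [Complex.mul_re, Complex.re_ofNat, Complex.im_ofNat, zero_mul, sub_zero]; linarith
  have hsq : ∑' n : ℕ, ((n : ℂ) ^ (-s)) ^ 2 = riemannZeta (2 * s) := by
    rw [← tsum_riemannZetaSummand h2s]
    refine tsum_congr fun n => ?_
    rw [← Complex.cpow_nat_mul]
    change _ = (n : ℂ) ^ (-(2 * s))
    ring_nf
  rw [eq_div_iff (riemannZeta_ne_zero_of_one_lt_re h2s), ← hsq, ← tsum_riemannZetaSummand hs]
  exact tsum_squarefree_mul_tsum_sq _ (summable_riemannZetaSummand hs)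

theorem natCast_cpow_one_sub_div {s : ℂ} (hs : s ≠ 0) (d : ℕ) :
    (d : ℂ) ^ (1 - s) / d = (d : ℂ) ^ (-s) := by
  rcases eq_or_ne d 0 with rfl | hd
  · simp [hs]
  · rw [show -s = 1 - s - 1 by ring, Complex.cpow_sub (1 - s) 1 (Nat.cast_ne_zero.mpr hd),
      Complex.cpow_one]

theorem prod_primeFactors_one_add_one_div_cpow (s : ℂ) {m : ℕ} (hm : m ≠ 0) :
    ∏ p ∈ m.primeFactors, (1 + 1 / (p : ℂ) ^ (s - 1)) =
      ∑ d ∈ m.divisors with Squarefree d, (d : ℂ) ^ (1 - s) := by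
  let w : ℕ →* ℂ :=
    { toFun := fun n => (n : ℂ) ^ (1 - s)
      map_one' := by simp
      map_mul' := fun m n => by push_cast; exact Complex.natCast_mul_natCast_cpow m n _ }
  simpa [w, ← Complex.cpow_neg] using prod_primeFactors_one_add_eq_sum_divisors_squarefree w hm

theorem cesaro_euler_like_plus_complex (s : ℂ) (hs : 1 < s.re) :
    Tendsto (fun N : ℕ =>
        (1 / (N : ℂ)) * ∑ m ∈ Finset.Icc 1 N,
          ∏ p ∈ m.primeFactors, (1 + 1 / (p : ℂ) ^ (s - 1)))
      atTop (nhds (riemannZeta s / riemannZeta (2 * s))) := by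
  let g : ℕ → ℂ := fun d => if Squarefree d then (d : ℂ) ^ (1 - s) else 0
  have hg (d : ℕ) : g d / d = if Squarefree d then (d : ℂ) ^ (-s) else 0 := by
    simp only [g]
    split_ifs
    · exact natCast_cpow_one_sub_div (Complex.ne_zero_of_one_lt_re hs) d
    · exact zero_div _
  have hsum : Summable fun d => ‖g d / d‖ := by
    simp_rw [hg]
    refine (summable_riemannZetaSummand hs).of_nonneg_of_le (fun _ => norm_nonneg _) fun d => ?_
    split_ifs <;> simp [riemannZetaSummandHom]
  rw [← tsum_squarefree_cpow_neg hs, ← tsum_congr hg]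
  refine (tendsto_cesaro_sum_divisors hsum).congr fun N => ?_
  congr 1
  refine sum_congr rfl fun m hm => ?_
  have hm0 : m ≠ 0 := Nat.one_le_iff_ne_zero.mp (mem_Icc.mp hm).1
  rw [prod_primeFactors_one_add_one_div_cpow s hm0, sum_filter]
end
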